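/- Let f : ℝ^m × ℝ^n → ℝ be twice continuously differentiable, convex in x for each fixed y and concave in y for each fixed x, and let F(x, y) = (∇_x f(x, y), −∇_y f(x, y)). Suppose F is L-Lipschitz and has Λ-Lipschitz derivative, and that there exists z* = (x*, y*) with F(z*) = 0 and ‖z^0 − z*‖ ≤ D for some D > 0 and initial point z^0. If 0 < η ≤ min{5/(ΛD), 1/(30L)} and the extragradient iterates are defined by z^{t+1} = z^t − ηF(z^t − ηF(z^t)), then for every integer T ≥ 1, writing z^T = (x^T, y^T), for all x' with ‖x' − x*‖ ≤ D and all y' with ‖y' − y*‖ ≤ D one has f(x^T, y') − f(x', y^T) ≤ 2√2·D²/(η√T). -/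

import Mathlib

open scoped RealInnerProductSpace NNReal
open Set

/-!
For a convex-concave `f`, the operator `F = (∇ₓ f, -∇_y f)` is monotone, and the gradient
inequalities bound the gap of `z` against `z'` by `⟪F z, z - z'⟫ ≤ ‖F z‖ ‖z - z'‖`.
For a monotone `K`-Lipschitz `F` with `ηK < 1`, each extragradient step is Fejér monotone towards
a zero `z*` of `F` with a decrease of at least `(1 - (ηK)²) η² ‖F zₜ‖²`, and `‖F zₜ‖` is
nonincreasing along the iterates (monotonicity between `zₜ` and `zₜ₊₁` plus Lipschitz continuity
between the extrapolated point and `zₜ₊₁`). Summing, `T (1 - (ηK)²) η² ‖F z_T‖² ≤ ‖z₀ - z*‖²`,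
so `‖F z_T‖ = O(D / (η √T))` while `‖z_T - z'‖ ≤ (1 + √2) D`.
-/

section Gradient

variable {E : Type*} [NormedAddCommGroup E] [InnerProductSpace ℝ E] [CompleteSpace E]

theorem ConvexOn.add_inner_gradient_sub_le {g : E → ℝ} (hg : ConvexOn ℝ univ g) {v : E}
    (hd : DifferentiableAt ℝ g v) (u : E) : g v + ⟪gradient g v, u - v⟫ ≤ g u := by
  let line : ℝ →ᵃ[ℝ] E := AffineMap.lineMap v u
  have hderiv : HasDerivAt (g ∘ line) (fderiv ℝ g v (u - v)) 0 :=
    hd.hasFDerivAt.comp_hasDerivAt_of_eq 0 AffineMap.hasDerivAt_lineMap (by simp [line])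
  have hslope := (hg.comp_affineMap line).le_slope_of_hasDerivAt (mem_univ 0) (mem_univ 1)
    one_pos hderiv
  simp only [slope, line, Function.comp_apply, AffineMap.lineMap_apply_zero,
    AffineMap.lineMap_apply_one, sub_zero, inv_one, one_smul, vsub_eq_sub] at hslope
  rw [inner_gradient_left]
  linarith

theorem ConcaveOn.le_add_inner_gradient_sub {g : E → ℝ} (hg : ConcaveOn ℝ univ g) {v : E}
    (hd : DifferentiableAt ℝ g v) (u : E) : g u ≤ g v + ⟪gradient g v, u - v⟫ := by
  have := hg.neg.add_inner_gradient_sub_le hd.neg u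
  rw [inner_gradient_left] at this ⊢
  simp only [Pi.neg_apply, fderiv_neg, neg_apply] at this
  linarith

end Gradient

section Extragradient

variable {E : Type*} [NormedAddCommGroup E] [InnerProductSpace ℝ E]

def IsMonotoneOperator (F : E → E) : Prop := ∀ z z', 0 ≤ ⟪F z - F z', z - z'⟫

def extragradientStep (F : E → E) (η : ℝ) (z : E) : E := z - η • F (z - η • F z)

variable {F : E → E} {K : ℝ≥0} {η : ℝ}

namespace IsMonotoneOperator

theorem norm_extragradientStep_sub_sq_add_le (hF : IsMonotoneOperator F) (hFK : LipschitzWith K F)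
    {zs : E} (hzs : F zs = 0) (hη : 0 ≤ η) (z : E) :
    ‖extragradientStep F η z - zs‖ ^ 2 + (1 - (η * K) ^ 2) * η ^ 2 * ‖F z‖ ^ 2 ≤ ‖z - zs‖ ^ 2 := by
  set w := z - η • F z
  have hmono : 0 ≤ ⟪F w, w - zs⟫ := by simpa [hzs] using hF w zs
  have hlip : ‖F w - F z‖ ≤ K * (η * ‖F z‖) := by
    simpa [w, norm_smul, abs_of_nonneg hη] using hFK.norm_sub_le w z
  have hlip_sq : ‖F w - F z‖ ^ 2 ≤ (η * K) ^ 2 * ‖F z‖ ^ 2 := by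
    calc ‖F w - F z‖ ^ 2 ≤ (K * (η * ‖F z‖)) ^ 2 := by gcongr
      _ = (η * K) ^ 2 * ‖F z‖ ^ 2 := by ring
  have hinner : ⟪F w, z - zs⟫ = η * ⟪F w, F z⟫ + ⟪F w, w - zs⟫ := by
    rw [show z - zs = η • F z + (w - zs) by simp only [w]; abel, inner_add_right,
      real_inner_smul_right]
  have hexpand : ‖extragradientStep F η z - zs‖ ^ 2
      = ‖z - zs‖ ^ 2 - 2 * η * ⟪F w, z - zs⟫ + η ^ 2 * ‖F w‖ ^ 2 := by
    rw [show extragradientStep F η z - zs = (z - zs) - η • F w by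
        simp only [extragradientStep, w]; abel,
      norm_sub_sq_real, real_inner_smul_right, norm_smul, Real.norm_of_nonneg hη,
      real_inner_comm (F w)]
    ring
  rw [hinner] at hexpand
  rw [norm_sub_sq_real] at hlip_sq
  nlinarith [mul_nonneg hη hmono]

theorem norm_apply_extragradientStep_le (hF : IsMonotoneOperator F) (hFK : LipschitzWith K F)
    (hη : 0 ≤ η) (hηK : η * K ≤ 1) (z : E) : ‖F (extragradientStep F η z)‖ ≤ ‖F z‖ := by
  rcases hη.eq_or_lt with rfl | hη
  · simp [extragradientStep]
  set w := z - η • F z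
  set z' := extragradientStep F η z
  have hstep : z - z' = η • F w := by simp [z', extragradientStep, w]
  have hmono : ⟪F w, F z'⟫ ≤ ⟪F w, F z⟫ := by
    have := hF z z'
    rw [hstep, real_inner_smul_right, inner_sub_left] at this
    rw [real_inner_comm (F z'), real_inner_comm (F z)]
    nlinarith
  have hlip : ‖F w - F z'‖ ≤ η * K * ‖F w - F z‖ := by
    have hwz' : w - z' = η • (F w - F z) := by
      simp only [z', extragradientStep, w, smul_sub]; abel
    simpa [hwz', norm_smul, abs_of_pos hη, mul_assoc, mul_left_comm] using hFK.norm_sub_le w z'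
  have hlip_sq : ‖F w - F z'‖ ^ 2 ≤ ‖F w - F z‖ ^ 2 := by
    calc ‖F w - F z'‖ ^ 2 ≤ (η * K * ‖F w - F z‖) ^ 2 := by gcongr
      _ ≤ (1 * ‖F w - F z‖) ^ 2 := by gcongr
      _ = ‖F w - F z‖ ^ 2 := by ring
  rw [norm_sub_sq_real, norm_sub_sq_real] at hlip_sq
  exact (sq_le_sq₀ (norm_nonneg _) (norm_nonneg _)).mp (by linarith)

variable {z : ℕ → E}

theorem antitone_norm_apply_extragradient (hF : IsMonotoneOperator F) (hFK : LipschitzWith K F)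
    (hη : 0 ≤ η) (hηK : η * K ≤ 1) (hz : ∀ t, z (t + 1) = extragradientStep F η (z t)) :
    Antitone fun t => ‖F (z t)‖ :=
  antitone_nat_of_succ_le fun t => by
    simpa only [hz] using hF.norm_apply_extragradientStep_le hFK hη hηK (z t)

theorem norm_extragradient_sub_sq_add_sum_le (hF : IsMonotoneOperator F)
    (hFK : LipschitzWith K F) {zs : E} (hzs : F zs = 0) (hη : 0 ≤ η)
    (hz : ∀ t, z (t + 1) = extragradientStep F η (z t)) (t : ℕ) :
    ‖z t - zs‖ ^ 2 + (1 - (η * K) ^ 2) * η ^ 2 * ∑ s ∈ Finset.range t, ‖F (z s)‖ ^ 2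
      ≤ ‖z 0 - zs‖ ^ 2 := by
  induction t with
  | zero => simp
  | succ t ih =>
    have hstep := hF.norm_extragradientStep_sub_sq_add_le hFK hzs hη (z t)
    rw [← hz] at hstep
    rw [Finset.sum_range_succ]
    linarith

theorem norm_extragradient_sub_le (hF : IsMonotoneOperator F) (hFK : LipschitzWith K F)
    {zs : E} (hzs : F zs = 0) (hη : 0 ≤ η) (hηK : η * K ≤ 1)
    (hz : ∀ t, z (t + 1) = extragradientStep F η (z t)) (t : ℕ) :
    ‖z t - zs‖ ≤ ‖z 0 - zs‖ := by
  have henergy := hF.norm_extragradient_sub_sq_add_sum_le hFK hzs hη hz t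
  have hcoef : 0 ≤ (1 - (η * K) ^ 2) * η ^ 2 :=
    mul_nonneg (sub_nonneg.2 (pow_le_one₀ (by positivity) hηK)) (sq_nonneg η)
  have hsum := Finset.sum_nonneg (s := Finset.range t) fun s _ => sq_nonneg ‖F (z s)‖
  exact (sq_le_sq₀ (norm_nonneg _) (norm_nonneg _)).mp (by nlinarith [mul_nonneg hcoef hsum])

theorem mul_sq_norm_apply_extragradient_le (hF : IsMonotoneOperator F)
    (hFK : LipschitzWith K F) {zs : E} (hzs : F zs = 0) (hη : 0 ≤ η) (hηK : η * K ≤ 1)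
    (hz : ∀ t, z (t + 1) = extragradientStep F η (z t)) (T : ℕ) :
    T * ((1 - (η * K) ^ 2) * η ^ 2 * ‖F (z T)‖ ^ 2) ≤ ‖z 0 - zs‖ ^ 2 := by
  have henergy := hF.norm_extragradient_sub_sq_add_sum_le hFK hzs hη hz T
  have hcoef : 0 ≤ (1 - (η * K) ^ 2) * η ^ 2 :=
    mul_nonneg (sub_nonneg.2 (pow_le_one₀ (by positivity) hηK)) (sq_nonneg η)
  have hsum : T * ‖F (z T)‖ ^ 2 ≤ ∑ s ∈ Finset.range T, ‖F (z s)‖ ^ 2 := by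
    simpa using Finset.card_nsmul_le_sum (Finset.range T) (fun s => ‖F (z s)‖ ^ 2) _
      fun s hs => pow_le_pow_left₀ (norm_nonneg _)
        (hF.antitone_norm_apply_extragradient hFK hη hηK hz (Finset.mem_range.mp hs).le) 2
  nlinarith [mul_le_mul_of_nonneg_left hsum hcoef, sq_nonneg ‖z T - zs‖]

theorem extragradient_inner_apply_sub_le (hF : IsMonotoneOperator F) (hFK : LipschitzWith K F)
    {zs : E} (hzs : F zs = 0) (hη : 0 < η) (hηK : η * K ≤ 1 / 30)
    (hz : ∀ t, z (t + 1) = extragradientStep F η (z t)) {D : ℝ} (hD : ‖z 0 - zs‖ ≤ D)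
    {T : ℕ} (hT : 1 ≤ T) {w : E} (hw : ‖zs - w‖ ≤ √2 * D) :
    ⟪F (z T), z T - w⟫ ≤ 2 * √2 * D ^ 2 / (η * √T) := by
  have hηK' : η * K ≤ 1 := hηK.trans (by norm_num)
  have hdist := hF.norm_extragradient_sub_le hFK hzs hη.le hηK' hz T
  have hres := hF.mul_sq_norm_apply_extragradient_le hFK hzs hη.le hηK' hz T
  have hT' : (0 : ℝ) < T := by exact_mod_cast hT
  have hD0 : 0 ≤ D := (norm_nonneg _).trans hD
  -- `ηK ≤ 1/30` makes `1 - (ηK)² ≥ 899/900`.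
  have hresidual : η * √T * ‖F (z T)‖ ≤ 900 / 899 * D := by
    have hηK_sq : (η * K) ^ 2 ≤ 1 / 900 := by
      nlinarith [mul_nonneg hη.le K.coe_nonneg]
    refine (sq_le_sq₀ (by positivity) (by positivity)).mp ?_
    rw [mul_pow, mul_pow, Real.sq_sqrt hT'.le]
    nlinarith [pow_le_pow_left₀ (norm_nonneg _) hD 2, sq_nonneg (η * ‖F (z T)‖)]
  have hzw : ‖z T - w‖ ≤ (1 + √2) * D := by
    calc ‖z T - w‖ ≤ ‖z T - zs‖ + ‖zs - w‖ := norm_sub_le_norm_sub_add_norm_sub _ _ _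
      _ ≤ (1 + √2) * D := by linarith
  calc ⟪F (z T), z T - w⟫ ≤ ‖F (z T)‖ * ‖z T - w‖ := real_inner_le_norm _ _
    _ ≤ ‖F (z T)‖ * ((1 + √2) * D) := by gcongr
    _ = η * √T * ‖F (z T)‖ * ((1 + √2) * D) / (η * √T) := by field_simp
    _ ≤ 900 / 899 * D * ((1 + √2) * D) / (η * √T) := by gcongr
    _ ≤ 2 * √2 * D ^ 2 / (η * √T) := by
      have hconst : 900 / 899 * (1 + √2) ≤ 2 * √2 := by
        nlinarith [Real.sq_sqrt zero_le_two, Real.sqrt_nonneg 2]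
      gcongr ?_ / _
      nlinarith [mul_le_mul_of_nonneg_right hconst (sq_nonneg D)]

end IsMonotoneOperator

end Extragradient

section Curry

variable {E₁ E₂ G : Type*} [NormedAddCommGroup E₁] [NormedSpace ℝ E₁] [NormedAddCommGroup E₂]
  [NormedSpace ℝ E₂] [NormedAddCommGroup G] [NormedSpace ℝ G]

theorem Differentiable.curry_left {f : E₁ → E₂ → G}
    (hf : Differentiable ℝ fun z : WithLp 2 (E₁ × E₂) => f z.fst z.snd) (y : E₂) :
    Differentiable ℝ fun x => f x y :=
  hf.comp ((WithLp.prodContinuousLinearEquiv 2 ℝ E₁ E₂).symm.differentiable.comp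
    (differentiable_id.prodMk (differentiable_const y)))

theorem Differentiable.curry_right {f : E₁ → E₂ → G}
    (hf : Differentiable ℝ fun z : WithLp 2 (E₁ × E₂) => f z.fst z.snd) (x : E₁) :
    Differentiable ℝ (f x) :=
  hf.comp ((WithLp.prodContinuousLinearEquiv 2 ℝ E₁ E₂).symm.differentiable.comp
    ((differentiable_const x).prodMk differentiable_id))

end Curry

section Saddle

variable {E₁ E₂ : Type*} [NormedAddCommGroup E₁] [InnerProductSpace ℝ E₁] [CompleteSpace E₁]
  [NormedAddCommGroup E₂] [InnerProductSpace ℝ E₂] [CompleteSpace E₂] {f : E₁ → E₂ → ℝ}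

noncomputable def saddleOperator (f : E₁ → E₂ → ℝ) (z : WithLp 2 (E₁ × E₂)) : WithLp 2 (E₁ × E₂) :=
  WithLp.toLp 2 (gradient (fun x => f x z.snd) z.fst, -gradient (f z.fst) z.snd)

theorem inner_saddleOperator (p q : WithLp 2 (E₁ × E₂)) :
    ⟪saddleOperator f p, q⟫ =
      ⟪gradient (fun x => f x p.snd) p.fst, q.fst⟫ - ⟪gradient (f p.fst) p.snd, q.snd⟫ := by
  simp [saddleOperator, WithLp.prod_inner_apply, sub_eq_add_neg]

theorem sub_le_inner_saddleOperator {p : WithLp 2 (E₁ × E₂)}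
    (hconv : ConvexOn ℝ univ fun x => f x p.snd) (hconc : ConcaveOn ℝ univ (f p.fst))
    (hdx : DifferentiableAt ℝ (fun x => f x p.snd) p.fst)
    (hdy : DifferentiableAt ℝ (f p.fst) p.snd) (q : WithLp 2 (E₁ × E₂)) :
    f p.fst q.snd - f q.fst p.snd ≤ ⟪saddleOperator f p, p - q⟫ := by
  have hx := hconv.add_inner_gradient_sub_le hdx q.fst
  have hy := hconc.le_add_inner_gradient_sub hdy q.snd
  rw [inner_saddleOperator, WithLp.sub_fst, WithLp.sub_snd, ← neg_sub q.fst, ← neg_sub q.snd,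
    inner_neg_right, inner_neg_right]
  linarith

theorem isMonotoneOperator_saddleOperator (hconv : ∀ y, ConvexOn ℝ univ fun x => f x y)
    (hconc : ∀ x, ConcaveOn ℝ univ (f x)) (hdx : ∀ y, Differentiable ℝ fun x => f x y)
    (hdy : ∀ x, Differentiable ℝ (f x)) : IsMonotoneOperator (saddleOperator f) := by
  intro p q
  have hpq := sub_le_inner_saddleOperator (p := p) (hconv _) (hconc _) (hdx _ _) (hdy _ _) q
  have hqp := sub_le_inner_saddleOperator (p := q) (hconv _) (hconc _) (hdx _ _) (hdy _ _) p
  rw [← neg_sub p q, inner_neg_right] at hqp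
  rw [inner_sub_left]
  linarith

end Saddle

theorem WithLp.prod_norm_le_sqrt_two_mul {E₁ E₂ : Type*} [SeminormedAddCommGroup E₁]
    [SeminormedAddCommGroup E₂] {w : WithLp 2 (E₁ × E₂)} {D : ℝ} (h₁ : ‖w.fst‖ ≤ D)
    (h₂ : ‖w.snd‖ ≤ D) : ‖w‖ ≤ √2 * D := by
  have hD : 0 ≤ D := (norm_nonneg _).trans h₁
  rw [WithLp.prod_norm_eq_of_L2, ← Real.sqrt_sq hD, ← Real.sqrt_mul zero_le_two]
  gcongr
  nlinarith [pow_le_pow_left₀ (norm_nonneg _) h₁ 2, pow_le_pow_left₀ (norm_nonneg _) h₂ 2]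

theorem extragradient_last_iterate_gap_general {m n : ℕ}
    (f : EuclideanSpace ℝ (Fin m) → EuclideanSpace ℝ (Fin n) → ℝ)
    (hf : ContDiff ℝ 2 (fun z : WithLp 2 (EuclideanSpace ℝ (Fin m) × EuclideanSpace ℝ (Fin n)) =>
      f (WithLp.equiv 2 _ z).1 (WithLp.equiv 2 _ z).2))
    (hconv : ∀ y, ConvexOn ℝ Set.univ (fun x => f x y))
    (hconc : ∀ x, ConcaveOn ℝ Set.univ (fun y => f x y))
    (F : WithLp 2 (EuclideanSpace ℝ (Fin m) × EuclideanSpace ℝ (Fin n)) →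
        WithLp 2 (EuclideanSpace ℝ (Fin m) × EuclideanSpace ℝ (Fin n)))
    (hFdef : ∀ z, F z = (WithLp.equiv 2 _).symm
      (gradient (fun x => f x (WithLp.equiv 2 _ z).2) (WithLp.equiv 2 _ z).1,
       -gradient (fun y => f (WithLp.equiv 2 _ z).1 y) (WithLp.equiv 2 _ z).2))
    (L Λ : ℝ) (hL : 0 < L)
    (hlip : ∀ z z', ‖F z - F z'‖ ≤ L * ‖z - z'‖)
    (zstar : WithLp 2 (EuclideanSpace ℝ (Fin m) × EuclideanSpace ℝ (Fin n)))
    (hzstar : F zstar = 0)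
    (D : ℝ)
    (η : ℝ) (hη : 0 < η) (hηle : η ≤ min (5 / (Λ * D)) (1 / (30 * L)))
    (z : ℕ → WithLp 2 (EuclideanSpace ℝ (Fin m) × EuclideanSpace ℝ (Fin n)))
    (hinit : ‖z 0 - zstar‖ ≤ D)
    (hrec : ∀ t : ℕ, z (t + 1) = z t - η • F (z t - η • F (z t))) :
    ∀ T : ℕ, 1 ≤ T →
      ∀ (x' : EuclideanSpace ℝ (Fin m)) (y' : EuclideanSpace ℝ (Fin n)),
        ‖x' - (WithLp.equiv 2 _ zstar).1‖ ≤ D →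
        ‖y' - (WithLp.equiv 2 _ zstar).2‖ ≤ D →
        f (WithLp.equiv 2 _ (z T)).1 y' - f x' (WithLp.equiv 2 _ (z T)).2
          ≤ 2 * Real.sqrt 2 * D ^ 2 / (η * Real.sqrt T) := by
  intro T hT x' y' hx' hy'
  have hsaddle : F = saddleOperator f := funext hFdef
  have hdiff := hf.differentiable (by norm_num)
  have hmono : IsMonotoneOperator F := hsaddle ▸
    isMonotoneOperator_saddleOperator hconv hconc hdiff.curry_left hdiff.curry_right
  have hFL : LipschitzWith ⟨L, hL.le⟩ F :=
    LipschitzWith.of_dist_le_mul fun z z' => by rw [dist_eq_norm, dist_eq_norm]; exact hlip z z'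
  have hηL : η * L ≤ 1 / 30 := by
    have := (le_div_iff₀ (by positivity)).mp (hηle.trans (min_le_right _ _))
    linarith
  set w := WithLp.toLp 2 (x', y')
  have hw : ‖zstar - w‖ ≤ √2 * D :=
    WithLp.prod_norm_le_sqrt_two_mul (by simpa [w, norm_sub_rev] using hx')
      (by simpa [w, norm_sub_rev] using hy')
  calc _ ≤ ⟪F (z T), z T - w⟫ := hsaddle ▸ sub_le_inner_saddleOperator (hconv _) (hconc _)
        (hdiff.curry_left _ _) (hdiff.curry_right _ _) w
    _ ≤ _ := hmono.extragradient_inner_apply_sub_le hFL hzstar hη hηL hrec hinit hT hw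

/-- Last-iterate primal-dual gap bound for extragradient on a smooth convex-concave saddle
point problem: with `F(x,y) = (∇ₓf(x,y), −∇_y f(x,y))` `L`-Lipschitz with `Λ`-Lipschitz
derivative, a saddle point `z* = (x*, y*)` with `F(z*) = 0`, `‖z⁰ − z*‖ ≤ D`, and step size
`0 < η ≤ min{5/(ΛD), 1/(30L)}`, the extragradient iterates `z^{t+1} = z^t − ηF(z^t − ηF(z^t))`
satisfy `f(x^T, y') − f(x', y^T) ≤ 2√2 D²/(η√T)` for all `x' ∈ B̄(x*, D)`, `y' ∈ B̄(y*, D)`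
and all `T ≥ 1`. -/
theorem extragradient_last_iterate_gap {m n : ℕ}
    (f : EuclideanSpace ℝ (Fin m) → EuclideanSpace ℝ (Fin n) → ℝ)
    (hf : ContDiff ℝ 2 (fun z : WithLp 2 (EuclideanSpace ℝ (Fin m) × EuclideanSpace ℝ (Fin n)) =>
      f (WithLp.equiv 2 _ z).1 (WithLp.equiv 2 _ z).2))
    (hconv : ∀ y, ConvexOn ℝ Set.univ (fun x => f x y))
    (hconc : ∀ x, ConcaveOn ℝ Set.univ (fun y => f x y))
    (F : WithLp 2 (EuclideanSpace ℝ (Fin m) × EuclideanSpace ℝ (Fin n)) →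
        WithLp 2 (EuclideanSpace ℝ (Fin m) × EuclideanSpace ℝ (Fin n)))
    (hFdef : ∀ z, F z = (WithLp.equiv 2 _).symm
      (gradient (fun x => f x (WithLp.equiv 2 _ z).2) (WithLp.equiv 2 _ z).1,
       -gradient (fun y => f (WithLp.equiv 2 _ z).1 y) (WithLp.equiv 2 _ z).2))
    (L Λ : ℝ) (hL : 0 < L) (hΛ : 0 < Λ)
    (hlip : ∀ z z', ‖F z - F z'‖ ≤ L * ‖z - z'‖)
    (hlipderiv : ∀ z z', ‖fderiv ℝ F z - fderiv ℝ F z'‖ ≤ Λ * ‖z - z'‖)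
    (zstar : WithLp 2 (EuclideanSpace ℝ (Fin m) × EuclideanSpace ℝ (Fin n)))
    (hzstar : F zstar = 0)
    (D : ℝ) (hD : 0 < D)
    (η : ℝ) (hη : 0 < η) (hηle : η ≤ min (5 / (Λ * D)) (1 / (30 * L)))
    (z : ℕ → WithLp 2 (EuclideanSpace ℝ (Fin m) × EuclideanSpace ℝ (Fin n)))
    (hinit : ‖z 0 - zstar‖ ≤ D)
    (hrec : ∀ t : ℕ, z (t + 1) = z t - η • F (z t - η • F (z t))) :
    ∀ T : ℕ, 1 ≤ T →
      ∀ (x' : EuclideanSpace ℝ (Fin m)) (y' : EuclideanSpace ℝ (Fin n)),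
        ‖x' - (WithLp.equiv 2 _ zstar).1‖ ≤ D →
        ‖y' - (WithLp.equiv 2 _ zstar).2‖ ≤ D →
        f (WithLp.equiv 2 _ (z T)).1 y' - f x' (WithLp.equiv 2 _ (z T)).2
          ≤ 2 * Real.sqrt 2 * D ^ 2 / (η * Real.sqrt T) :=
  extragradient_last_iterate_gap_general f hf hconv hconc F hFdef L Λ hL hlip zstar hzstar D η hη
    hηle z hinit hrec
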